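/- For a real symmetric positive definite 3×3 matrix B and J = μ(1-γ)(I - B⁻¹) + μγ(B - I), one has tr((B² - B)J) = μ(1-γ)|B - I|² + μγ|B^{3/2} - B^{1/2}|². -/
import Mathlib


open Matrix NormedSpace

local notation "M3" => Matrix (Fin 3) (Fin 3) ℝ

noncomputable def frobSq (A : Matrix (Fin 3) (Fin 3) ℝ) : ℝ := (Aᵀ * A).trace

noncomputable def frob (A : Matrix (Fin 3) (Fin 3) ℝ) : ℝ := Real.sqrt (frobSq A)

noncomputable def psi (μ γ : ℝ) (A : Matrix (Fin 3) (Fin 3) ℝ) : ℝ :=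
  μ * ((1 - γ) * (A.trace - 3 - Real.log A.det) + γ / 2 * frobSq (A - 1))

noncomputable def Jmat (μ γ : ℝ) (B : Matrix (Fin 3) (Fin 3) ℝ) : Matrix (Fin 3) (Fin 3) ℝ :=
  (μ * (1 - γ)) • (1 - B⁻¹) + (μ * γ) • (B - 1)

noncomputable def minEig (A : Matrix (Fin 3) (Fin 3) ℝ) : ℝ :=
  sInf {r : ℝ | Module.End.HasEigenvalue (Matrix.toLin' A) r}

noncomputable def rho (ε : ℝ) (A : Matrix (Fin 3) (Fin 3) ℝ) : ℝ :=
  max 0 (minEig A - ε) / (minEig A * (1 + ε * frob A ^ 3))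

theorem stmt3 (μ γ : ℝ) (hμ : 0 < μ) (hγ : γ ∈ Set.Icc (0 : ℝ) 1)
    (B S : M3) (hBsym : B.IsSymm) (hBpd : B.PosDef)
    (hSpd : S.PosDef) (hSB : S * S = B) :
    ((B * B - B) * Jmat μ γ B).trace
      = μ * (1 - γ) * frobSq (B - 1) + μ * γ * frobSq (B * S - S) := by

  have hdet : IsUnit B.det := isUnit_iff_ne_zero.mpr (ne_of_gt hBpd.det_pos)
  have hBinv : B * B⁻¹ = 1 := Matrix.mul_nonsing_inv B hdet
  have hBt : Bᵀ = B := hBsym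
  have hSt : Sᵀ = S := by
    have h := hSpd.isHermitian
    simpa [Matrix.IsHermitian, Matrix.conjTranspose_eq_transpose_of_trivial] using h
  have e1 : (B*B - B) * (1 - B⁻¹) = B*B - B - B + 1 := by
    rw [Matrix.sub_mul, Matrix.mul_sub, Matrix.mul_sub, Matrix.mul_one, Matrix.mul_one,
      Matrix.mul_assoc, hBinv, Matrix.mul_one]
    abel
  have e1' : (B-1)ᵀ * (B-1) = B*B - B - B + 1 := by
    rw [Matrix.transpose_sub, Matrix.transpose_one, hBt]
    noncomm_ring
  have e2 : (B*B - B)*(B - 1) = B*(B*B) - B*B - B*B + B := by noncomm_ring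
  have e3 : (B*S - S)ᵀ * (B*S - S) = S*(B*(B*S)) - S*(B*S) - S*(B*S) + S*S := by
    rw [Matrix.transpose_sub, Matrix.transpose_mul, hBt, hSt]
    noncomm_ring
  have t1 : (S*(B*(B*S))).trace = (B*(B*B)).trace := by
    rw [Matrix.trace_mul_comm]
    rw [Matrix.mul_assoc, Matrix.mul_assoc, hSB]
  have t2 : (S*(B*S)).trace = (B*B).trace := by
    rw [Matrix.trace_mul_comm, Matrix.mul_assoc, hSB]
  have t3 : (S*S).trace = B.trace := by rw [hSB]
  simp only [Jmat, frobSq, Matrix.mul_add, Matrix.mul_smul, Matrix.trace_add,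
    Matrix.trace_smul, smul_eq_mul, e1, e1', e2, e3, Matrix.trace_sub, t1, t2, t3]
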